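/- arXiv:2303.00646 — 7 statements merged into one kernel-verified Lean document; each statement's English description precedes it below -/
import Mathlib

section
/- For any real numbers α and β, the bilinear antisymmetric bracket on R^4 with basis {e1, e2, e3, e4} determined by [e1, e2] = −(α·e1 − e4), [e2, e3] = β·(α·e1 − e4), [e2, e4] = α·(α·e1 − e4), and all other basis brackets zero, satisfies the Jacobi identity and hence defines a Lie algebra structure. -/
noncomputable section

/-- The standard basis `e1, e2, e3, e4` of `ℝ⁴`. -/
def e4 (i : Fin 4) : Fin 4 → ℝ := Pi.single i 1

/-- The Kondo–Tamaru brackets on `ℝ⁴` satisfy the Jacobi identity. -/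
theorem kondoTamaru_jacobi (α β : ℝ)
    (B : (Fin 4 → ℝ) →ₗ[ℝ] (Fin 4 → ℝ) →ₗ[ℝ] (Fin 4 → ℝ))
    (hanti : ∀ X Y, B X Y = - B Y X)
    (h12 : B (e4 0) (e4 1) = -(α • e4 0 - e4 3))
    (h13 : B (e4 0) (e4 2) = 0)
    (h14 : B (e4 0) (e4 3) = 0)
    (h23 : B (e4 1) (e4 2) = β • (α • e4 0 - e4 3))
    (h24 : B (e4 1) (e4 3) = α • (α • e4 0 - e4 3))
    (h34 : B (e4 2) (e4 3) = 0) :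
    ∀ X Y Z, B (B X Y) Z + B (B Y Z) X + B (B Z X) Y = 0 := by
  set v : Fin 4 → ℝ := α • e4 0 - e4 3 with hvdef
  -- B X X = 0
  have hself : ∀ X, B X X = 0 := by
    intro X
    have h := hanti X X
    have h2 : (2 : ℝ) • B X X = 0 := by
      rw [two_smul]; nth_rewrite 2 [h]; simp
    rcases smul_eq_zero.mp h2 with h' | h'
    · norm_num at h'
    · exact h'
  -- derived brackets
  have h21 : B (e4 1) (e4 0) = v := by rw [hanti, h12]; simp
  have h31 : B (e4 2) (e4 0) = 0 := by rw [hanti, h13]; simp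
  have h41 : B (e4 3) (e4 0) = 0 := by rw [hanti, h14]; simp
  have h32 : B (e4 2) (e4 1) = -(β • v) := by rw [hanti, h23]
  have h42 : B (e4 3) (e4 1) = -(α • v) := by rw [hanti, h24]
  have h43 : B (e4 3) (e4 2) = 0 := by rw [hanti, h34]; simp
  -- v is central
  have expand : ∀ W, B v W = α • B (e4 0) W - B (e4 3) W := by
    intro W
    rw [hvdef, map_sub, map_smul]
    simp
  have hv0 : B v (e4 0) = 0 := by rw [expand, hself, h41]; simp
  have hv1 : B v (e4 1) = 0 := by rw [expand, h12, h42]; module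
  have hv2 : B v (e4 2) = 0 := by rw [expand, h13, h43]; simp
  have hv3 : B v (e4 3) = 0 := by rw [expand, h14, hself]; simp
  have hBapply : ∀ i, (Pi.basisFun ℝ (Fin 4)) i = e4 i := by
    intro i
    ext j
    simp [e4, Pi.basisFun_apply]
  have hvz : ∀ X, B v X = 0 := by
    have hz : B v = 0 := by
      apply (Pi.basisFun ℝ (Fin 4)).ext
      intro i
      rw [hBapply i]
      fin_cases i
      · exact hv0
      · exact hv1
      · exact hv2
      · exact hv3
    intro X
    rw [hz]
    rfl
  -- every bracket lands in span {v}
  set Q : Submodule ℝ (Fin 4 → ℝ) := Submodule.span ℝ {v} with hQ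
  have hvmem : v ∈ Q := Submodule.mem_span_singleton_self v
  have m01 : B (e4 0) (e4 1) ∈ Q := by rw [h12]; exact Q.neg_mem hvmem
  have m02 : B (e4 0) (e4 2) ∈ Q := by rw [h13]; exact Q.zero_mem
  have m03 : B (e4 0) (e4 3) ∈ Q := by rw [h14]; exact Q.zero_mem
  have m10 : B (e4 1) (e4 0) ∈ Q := by rw [h21]; exact hvmem
  have m12 : B (e4 1) (e4 2) ∈ Q := by rw [h23]; exact Q.smul_mem β hvmem
  have m13 : B (e4 1) (e4 3) ∈ Q := by rw [h24]; exact Q.smul_mem α hvmem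
  have m20 : B (e4 2) (e4 0) ∈ Q := by rw [h31]; exact Q.zero_mem
  have m21 : B (e4 2) (e4 1) ∈ Q := by rw [h32]; exact Q.neg_mem (Q.smul_mem β hvmem)
  have m23 : B (e4 2) (e4 3) ∈ Q := by rw [h34]; exact Q.zero_mem
  have m30 : B (e4 3) (e4 0) ∈ Q := by rw [h41]; exact Q.zero_mem
  have m31 : B (e4 3) (e4 1) ∈ Q := by rw [h42]; exact Q.neg_mem (Q.smul_mem α hvmem)
  have m32 : B (e4 3) (e4 2) ∈ Q := by rw [h43]; exact Q.zero_mem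
  have mdiag : ∀ i, B (e4 i) (e4 i) ∈ Q := by
    intro i; rw [hself]; exact Q.zero_mem
  have mbasis : ∀ i j, B (e4 i) (e4 j) ∈ Q := by
    intro i j
    fin_cases i <;> fin_cases j <;>
      first
        | exact mdiag _
        | exact m01 | exact m02 | exact m03
        | exact m10 | exact m12 | exact m13
        | exact m20 | exact m21 | exact m23
        | exact m30 | exact m31 | exact m32
  have hmem : ∀ X Y, B X Y ∈ Q := by
    have hzero : B.compr₂ Q.mkQ = 0 := by
      apply (Pi.basisFun ℝ (Fin 4)).ext
      intro i
      apply (Pi.basisFun ℝ (Fin 4)).ext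
      intro j
      have h : Q.mkQ (B (e4 i) (e4 j)) = 0 := by
        rw [show Q.mkQ (B (e4 i) (e4 j)) = Submodule.Quotient.mk (B (e4 i) (e4 j)) from rfl,
          Submodule.Quotient.mk_eq_zero]
        exact mbasis i j
      simpa [LinearMap.compr₂_apply, hBapply] using h
    intro X Y
    have h : Q.mkQ (B X Y) = 0 := by
      have h1 := congrArg (fun f => f X Y) hzero
      simpa [LinearMap.compr₂_apply] using h1
    rwa [show Q.mkQ (B X Y) = Submodule.Quotient.mk (B X Y) from rfl,
      Submodule.Quotient.mk_eq_zero] at h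
  -- double brackets vanish
  have hdouble : ∀ X Y Z, B (B X Y) Z = 0 := by
    intro X Y Z
    obtain ⟨c, hc⟩ := Submodule.mem_span_singleton.mp (hmem X Y)
    rw [← hc, map_smul, LinearMap.smul_apply, hvz, smul_zero]
  intro X Y Z
  rw [hdouble, hdouble, hdouble]
  simp
end
end

section
/- For ε = ±1, the bilinear antisymmetric bracket on R^4 with basis {v1, v2, v3, v4} determined by [v1, v2] = −3√14·v2 + 2ε√11·v3, [v1, v3] = √14·v3, [v1, v4] = −2√14·v4, [v2, v3] = 4·v4, and all other basis brackets zero, satisfies the Jacobi identity and hence defines a Lie algebra structure. -/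
noncomputable section

/-- The brackets underlying the strictly Bach-flat case (i) satisfy the Jacobi identity. -/
theorem strictlyBachFlat_jacobi (ε : ℝ) (hε : ε = 1 ∨ ε = -1)
    (B : (Fin 4 → ℝ) →ₗ[ℝ] (Fin 4 → ℝ) →ₗ[ℝ] (Fin 4 → ℝ))
    (hanti : ∀ X Y, B X Y = - B Y X)
    (h12 : B (e4 0) (e4 1) = (-3 * Real.sqrt 14) • e4 1 + (2 * ε * Real.sqrt 11) • e4 2)
    (h13 : B (e4 0) (e4 2) = Real.sqrt 14 • e4 2)
    (h14 : B (e4 0) (e4 3) = (-2 * Real.sqrt 14) • e4 3)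
    (h23 : B (e4 1) (e4 2) = (4 : ℝ) • e4 3)
    (h24 : B (e4 1) (e4 3) = 0)
    (h34 : B (e4 2) (e4 3) = 0) :
    ∀ X Y Z, B (B X Y) Z + B (B Y Z) X + B (B Z X) Y = 0 := by
  have hself : ∀ X, B X X = 0 := by
    intro X
    have h := hanti X X
    have h2 : (2 : ℝ) • B X X = 0 := by
      rw [two_smul]; nth_rewrite 1 [h]; abel
    exact (smul_eq_zero.mp h2).resolve_left (by norm_num)
  have h21 : B (e4 1) (e4 0)
      = -((-3 * Real.sqrt 14) • e4 1 + (2 * ε * Real.sqrt 11) • e4 2) := by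
    rw [hanti, h12]
  have h31 : B (e4 2) (e4 0) = -(Real.sqrt 14 • e4 2) := by rw [hanti, h13]
  have h41 : B (e4 3) (e4 0) = -((-2 * Real.sqrt 14) • e4 3) := by rw [hanti, h14]
  have h32 : B (e4 2) (e4 1) = -((4 : ℝ) • e4 3) := by rw [hanti, h23]
  have h42 : B (e4 3) (e4 1) = 0 := by rw [hanti, h24, neg_zero]
  have h43 : B (e4 3) (e4 2) = 0 := by rw [hanti, h34, neg_zero]
  have jac : ∀ i j k : Fin 4,
      B (B (e4 i) (e4 j)) (e4 k) + B (B (e4 j) (e4 k)) (e4 i)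
        + B (B (e4 k) (e4 i)) (e4 j) = 0 := by
    intro i j k
    fin_cases i <;> fin_cases j <;> fin_cases k <;>
      simp only [Fin.zero_eta, Fin.mk_one, Fin.reduceFinMk, Fin.isValue,
        map_add, map_smul, map_neg, map_zero, LinearMap.add_apply,
        LinearMap.smul_apply, LinearMap.neg_apply, LinearMap.zero_apply,
        h12, h13, h14, h23, h24, h34, h21, h31, h41, h32, h42, h43, hself,
        smul_zero, neg_zero, add_zero, zero_add, smul_add, smul_neg, smul_smul,
        neg_neg, neg_add_rev] <;>
      module
  have expand : ∀ W : Fin 4 → ℝ, W = ∑ i, W i • e4 i := by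
    intro W
    ext j
    simp [e4, Pi.single_apply, Finset.sum_apply]
  have jac2 : ∀ (i j : Fin 4) (Z : Fin 4 → ℝ),
      B (B (e4 i) (e4 j)) Z + B (B (e4 j) Z) (e4 i) + B (B Z (e4 i)) (e4 j) = 0 := by
    intro i j Z
    rw [expand Z]
    simp only [map_sum, map_smul, LinearMap.sum_apply, LinearMap.smul_apply,
      Finset.sum_apply]
    rw [← Finset.sum_add_distrib, ← Finset.sum_add_distrib]
    refine Finset.sum_eq_zero fun k _ => ?_
    rw [← smul_add, ← smul_add, jac i j k, smul_zero]
  have jac1 : ∀ (i : Fin 4) (Y Z : Fin 4 → ℝ),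
      B (B (e4 i) Y) Z + B (B Y Z) (e4 i) + B (B Z (e4 i)) Y = 0 := by
    intro i Y Z
    rw [expand Y]
    simp only [map_sum, map_smul, LinearMap.sum_apply, LinearMap.smul_apply,
      Finset.sum_apply]
    rw [← Finset.sum_add_distrib, ← Finset.sum_add_distrib]
    refine Finset.sum_eq_zero fun j _ => ?_
    rw [← smul_add, ← smul_add, jac2 i j Z, smul_zero]
  intro X Y Z
  rw [expand X]
  simp only [map_sum, map_smul, LinearMap.sum_apply, LinearMap.smul_apply,
    Finset.sum_apply]
  rw [← Finset.sum_add_distrib, ← Finset.sum_add_distrib]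
  refine Finset.sum_eq_zero fun i _ => ?_
  rw [← smul_add, ← smul_add, jac1 i Y Z, smul_zero]
end
end

section
/- Fix real numbers κ1, κ2, κ3 and ε = ±1 with ε·κ2 ≠ 0, and consider the Lie algebra g on R^4 with basis {u1, u2, u3, u4} and nonzero brackets [u1, u3] = −ε·u2, [u1, u4] = κ1·u2 + κ2·u3, [u3, u4] = κ3·u2. Then g is nilpotent of nilpotency class exactly 3; that is, the lower central series satisfies g ⊋ [g,g] ⊋ [g,[g,g]] ⊋ 0 with [g,[g,[g,g]]] = 0. -/
/-!
Write `b 0, …, b 3` for `u1, …, u4`. The centre contains `b 1`, every bracket with `b 2` lies in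
`K ∙ b 1`, and every bracket lies in `span {b 1, b 2}`; hence `g¹ ⊆ span {b 1, b 2}`,
`g² ⊆ K ∙ b 1` and `g³ = 0`. Conversely `⁅b 0, b 3⁆ = κ1 • b 1 + κ2 • b 2` and
`⁅b 0, ⁅b 0, b 3⁆⁆ = -(ε κ2) • b 1` put `b 1` in `g²` and then `b 2` in `g¹`, as `ε κ2 ≠ 0`;
linear independence of the basis makes all inclusions strict. The Jacobi identity is checked
by expanding trilinearly in the basis.
-/

noncomputable section

open Module LieModule

section LieModule

variable {R L M ι : Type*} [CommRing R] [LieRing L] [LieAlgebra R L]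
  [AddCommGroup M] [Module R M] [LieRingModule L M]

theorem LieModule.lie_mem_lowerCentralSeries_succ (x : L) {k : ℕ} {m : M}
    (hm : m ∈ lowerCentralSeries R L M k) : ⁅x, m⁆ ∈ lowerCentralSeries R L M (k + 1) := by
  rw [lowerCentralSeries_succ]
  exact LieSubmodule.lie_mem_lie (LieSubmodule.mem_top x) hm

variable [LieModule R L M]

theorem lie_mem_of_mem_span {x : L} {s : Set M} {N : Submodule R M} (h : ∀ m ∈ s, ⁅x, m⁆ ∈ N)
    {m : M} (hm : m ∈ Submodule.span R s) : ⁅x, m⁆ ∈ N :=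
  (Submodule.span_le (p := N.comap (toEnd R L M x))).2 h hm

theorem Module.Basis.lie_mem_of_forall (b : Basis ι R L) {N : Submodule R M} {m : M}
    (h : ∀ i, ⁅b i, m⁆ ∈ N) (x : L) : ⁅x, m⁆ ∈ N := by
  have hle : Submodule.span R (Set.range b) ≤
      N.comap ((toEnd R L M : L →ₗ[R] Module.End R M).flip m) :=
    Submodule.span_le.2 (Set.range_subset_iff.2 h)
  simpa using hle (b.mem_span x)

theorem Module.Basis.lie_mem_of_forall₂ (b : Basis ι R L) {N : Submodule R L}
    (h : ∀ i j, ⁅b i, b j⁆ ∈ N) (x y : L) : ⁅x, y⁆ ∈ N :=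
  lie_mem_of_mem_span (by rintro _ ⟨j, rfl⟩; exact b.lie_mem_of_forall (h · j) x) (b.mem_span y)

theorem LieModule.lowerCentralSeries_succ_le {k : ℕ} {P N : Submodule R M}
    (hk : (lowerCentralSeries R L M k : Submodule R M) ≤ P) (h : ∀ x : L, ∀ m ∈ P, ⁅x, m⁆ ∈ N) :
    (lowerCentralSeries R L M (k + 1) : Submodule R M) ≤ N := by
  rw [lowerCentralSeries_succ, LieSubmodule.lieIdeal_oper_eq_linear_span', Submodule.span_le]
  rintro _ ⟨x, -, m, hm, rfl⟩
  exact h x m (hk hm)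

end LieModule

theorem jacobi_of_basis_brackets {R V : Type*} [CommRing R] [AddCommGroup V] [Module R V]
    [IsAddTorsionFree V] (v : Basis (Fin 4) R V) (κ1 κ2 κ3 ε : R) (B : V →ₗ[R] V →ₗ[R] V)
    (hskew : ∀ X Y, B X Y = - B Y X)
    (h02 : B (v 0) (v 2) = (-ε) • v 1) (h03 : B (v 0) (v 3) = κ1 • v 1 + κ2 • v 2)
    (h23 : B (v 2) (v 3) = κ3 • v 1)
    (h01 : B (v 0) (v 1) = 0) (h12 : B (v 1) (v 2) = 0) (h13 : B (v 1) (v 3) = 0) (X Y Z : V) :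
    B (B X Y) Z + B (B Y Z) X + B (B Z X) Y = 0 := by
  have hself (X : V) : B X X = 0 := self_eq_neg.1 (hskew X X)
  have hswap {X Y W : V} (h : B X Y = W) : B Y X = -W := by rw [hskew, h]
  rw [← v.sum_repr X, ← v.sum_repr Y, ← v.sum_repr Z]
  simp only [Fin.sum_univ_four, map_add, map_smul, LinearMap.add_apply, LinearMap.smul_apply,
    h01, h02, h03, h12, h13, h23, hswap h01, hswap h02, hswap h03, hswap h12, hswap h13,
    hswap h23, hself, map_neg, LinearMap.neg_apply, smul_zero, smul_neg, neg_zero, zero_add,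
    add_zero, smul_add]
  module

structure BracketTable {R L : Type*} [CommRing R] [LieRing L] [LieAlgebra R L]
    (b : Basis (Fin 4) R L) (κ1 κ2 κ3 ε : R) : Prop where
  lie_zero_two : ⁅b 0, b 2⁆ = (-ε) • b 1
  lie_zero_three : ⁅b 0, b 3⁆ = κ1 • b 1 + κ2 • b 2
  lie_two_three : ⁅b 2, b 3⁆ = κ3 • b 1
  lie_zero_one : ⁅b 0, b 1⁆ = 0
  lie_one_two : ⁅b 1, b 2⁆ = 0
  lie_one_three : ⁅b 1, b 3⁆ = 0

namespace BracketTable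

section CommRing

variable {R L : Type*} [CommRing R] [LieRing L] [LieAlgebra R L] {b : Basis (Fin 4) R L}
  {κ1 κ2 κ3 ε : R}

theorem lie_basis_one_eq_zero (h : BracketTable b κ1 κ2 κ3 ε) (x : L) : ⁅x, b 1⁆ = 0 := by
  suffices ⁅x, b 1⁆ ∈ (⊥ : Submodule R L) from this
  refine b.lie_mem_of_forall (fun i ↦ ?_) x
  fin_cases i <;> simp [h.lie_zero_one, ← lie_skew (b 2) (b 1), ← lie_skew (b 3) (b 1),
    h.lie_one_two, h.lie_one_three]

theorem lie_basis_two_mem_span (h : BracketTable b κ1 κ2 κ3 ε) (x : L) :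
    ⁅x, b 2⁆ ∈ R ∙ b 1 := by
  refine b.lie_mem_of_forall (fun i ↦ ?_) x
  fin_cases i <;> simp [h.lie_zero_two, h.lie_one_two, ← lie_skew (b 3) (b 2), h.lie_two_three,
    Submodule.mem_span_singleton_self, Submodule.smul_mem]

theorem lie_mem_span_pair (h : BracketTable b κ1 κ2 κ3 ε) (x y : L) :
    ⁅x, y⁆ ∈ Submodule.span R {b 1, b 2} := by
  have h1 : b 1 ∈ Submodule.span R {b 1, b 2} := Submodule.subset_span (by simp)
  have h2 : b 2 ∈ Submodule.span R {b 1, b 2} := Submodule.subset_span (by simp)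
  refine b.lie_mem_of_forall₂ (fun i j ↦ ?_) x y
  fin_cases i <;> fin_cases j <;> simp [h.lie_zero_one, h.lie_zero_two, h.lie_zero_three,
    h.lie_one_two, h.lie_one_three, h.lie_two_three, ← lie_skew (b 1) (b 0),
    ← lie_skew (b 2) (b 0), ← lie_skew (b 3) (b 0), ← lie_skew (b 2) (b 1), ← lie_skew (b 3) (b 1),
    ← lie_skew (b 3) (b 2), Submodule.smul_mem, Submodule.add_mem, h1, h2]

theorem lie_mem_span_singleton_of_mem_span_pair (h : BracketTable b κ1 κ2 κ3 ε) (x : L) {m : L}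
    (hm : m ∈ Submodule.span R {b 1, b 2}) : ⁅x, m⁆ ∈ R ∙ b 1 := by
  refine lie_mem_of_mem_span (fun m hm ↦ ?_) hm
  rcases hm with rfl | rfl
  · simp [h.lie_basis_one_eq_zero]
  · exact h.lie_basis_two_mem_span x

theorem lowerCentralSeries_one_le (h : BracketTable b κ1 κ2 κ3 ε) :
    (lowerCentralSeries R L L 1 : Submodule R L) ≤ Submodule.span R {b 1, b 2} :=
  lowerCentralSeries_succ_le le_top fun x m _ ↦ h.lie_mem_span_pair x m

theorem lowerCentralSeries_two_le (h : BracketTable b κ1 κ2 κ3 ε) :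
    (lowerCentralSeries R L L 2 : Submodule R L) ≤ R ∙ b 1 :=
  lowerCentralSeries_succ_le h.lowerCentralSeries_one_le fun x _ ↦
    h.lie_mem_span_singleton_of_mem_span_pair x

theorem lowerCentralSeries_three_eq_bot (h : BracketTable b κ1 κ2 κ3 ε) :
    lowerCentralSeries R L L 3 = ⊥ := by
  rw [eq_bot_iff, ← LieSubmodule.toSubmodule_le_toSubmodule]
  refine lowerCentralSeries_succ_le h.lowerCentralSeries_two_le fun x m hm ↦ ?_
  obtain ⟨c, rfl⟩ := Submodule.mem_span_singleton.1 hm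
  simp [h.lie_basis_one_eq_zero]

theorem lowerCentralSeries_one_lt_zero [Nontrivial R] (h : BracketTable b κ1 κ2 κ3 ε) :
    lowerCentralSeries R L L 1 < lowerCentralSeries R L L 0 := by
  have hb0 : b 0 ∉ Submodule.span R {b 1, b 2} := by
    simpa [Set.image_insert_eq] using b.linearIndependent.notMem_span_image (s := {1, 2}) (by decide)
  exact SetLike.lt_iff_le_and_exists.2 ⟨antitone_lowerCentralSeries R L L (by norm_num),
    b 0, LieSubmodule.mem_top _, fun h0 ↦ hb0 (h.lowerCentralSeries_one_le h0)⟩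

end CommRing

section Field

variable {K L : Type*} [Field K] [LieRing L] [LieAlgebra K L] {b : Basis (Fin 4) K L}
  {κ1 κ2 κ3 ε : K}

theorem basis_one_mem_lowerCentralSeries_two (h : BracketTable b κ1 κ2 κ3 ε) (hκ : ε * κ2 ≠ 0) :
    b 1 ∈ lowerCentralSeries K L L 2 := by
  have hmem : ⁅b 0, ⁅b 0, b 3⁆⁆ ∈ lowerCentralSeries K L L 2 :=
    lie_mem_lowerCentralSeries_succ _ (lie_mem_lowerCentralSeries_succ _ (LieSubmodule.mem_top _))
  have hcalc : ⁅b 0, ⁅b 0, b 3⁆⁆ = (-(ε * κ2)) • b 1 := by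
    rw [h.lie_zero_three, lie_add, lie_smul, lie_smul, h.lie_zero_one, h.lie_zero_two]
    module
  rw [hcalc] at hmem
  exact (Submodule.smul_mem_iff _ (neg_ne_zero.2 hκ)).1 hmem

theorem basis_two_mem_lowerCentralSeries_one (h : BracketTable b κ1 κ2 κ3 ε) (hκ : ε * κ2 ≠ 0) :
    b 2 ∈ lowerCentralSeries K L L 1 := by
  have hmem : ⁅b 0, b 3⁆ ∈ lowerCentralSeries K L L 1 :=
    lie_mem_lowerCentralSeries_succ _ (LieSubmodule.mem_top _)
  have hb1 : b 1 ∈ lowerCentralSeries K L L 1 :=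
    antitone_lowerCentralSeries K L L (by norm_num) (h.basis_one_mem_lowerCentralSeries_two hκ)
  rw [h.lie_zero_three, add_mem_cancel_left (SMulMemClass.smul_mem κ1 hb1)] at hmem
  exact (Submodule.smul_mem_iff _ (right_ne_zero_of_mul hκ)).1 hmem

theorem lowerCentralSeries_two_lt_one (h : BracketTable b κ1 κ2 κ3 ε) (hκ : ε * κ2 ≠ 0) :
    lowerCentralSeries K L L 2 < lowerCentralSeries K L L 1 := by
  have hb2 : b 2 ∉ K ∙ b 1 := by
    simpa using b.linearIndependent.notMem_span_image (s := {1}) (by decide)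
  exact SetLike.lt_iff_le_and_exists.2 ⟨antitone_lowerCentralSeries K L L (by norm_num),
    b 2, h.basis_two_mem_lowerCentralSeries_one hκ, fun h2 ↦ hb2 (h.lowerCentralSeries_two_le h2)⟩

theorem bot_lt_lowerCentralSeries_two (h : BracketTable b κ1 κ2 κ3 ε) (hκ : ε * κ2 ≠ 0) :
    ⊥ < lowerCentralSeries K L L 2 :=
  SetLike.lt_iff_le_and_exists.2 ⟨bot_le, b 1, h.basis_one_mem_lowerCentralSeries_two hκ,
    fun h1 ↦ b.ne_zero 1 ((LieSubmodule.mem_bot _).1 h1)⟩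

end Field

end BracketTable

theorem threeStepNilpotent_general (κ1 κ2 κ3 ε : ℝ) (hκ : ε * κ2 ≠ 0) :
    (∀ B : (Fin 4 → ℝ) →ₗ[ℝ] (Fin 4 → ℝ) →ₗ[ℝ] (Fin 4 → ℝ),
      (∀ X Y, B X Y = - B Y X) →
      B (e4 0) (e4 2) = (-ε) • e4 1 →
      B (e4 0) (e4 3) = κ1 • e4 1 + κ2 • e4 2 →
      B (e4 2) (e4 3) = κ3 • e4 1 →
      B (e4 0) (e4 1) = 0 → B (e4 1) (e4 2) = 0 → B (e4 1) (e4 3) = 0 →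
      ∀ X Y Z, B (B X Y) Z + B (B Y Z) X + B (B Z X) Y = 0) ∧
    (∀ (L : Type) [LieRing L] [LieAlgebra ℝ L] (b : Module.Basis (Fin 4) ℝ L),
      ⁅b 0, b 2⁆ = (-ε) • b 1 →
      ⁅b 0, b 3⁆ = κ1 • b 1 + κ2 • b 2 →
      ⁅b 2, b 3⁆ = κ3 • b 1 →
      ⁅b 0, b 1⁆ = 0 → ⁅b 1, b 2⁆ = 0 → ⁅b 1, b 3⁆ = 0 →
      LieModule.lowerCentralSeries ℝ L L 1 < LieModule.lowerCentralSeries ℝ L L 0 ∧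
      LieModule.lowerCentralSeries ℝ L L 2 < LieModule.lowerCentralSeries ℝ L L 1 ∧
      ⊥ < LieModule.lowerCentralSeries ℝ L L 2 ∧
      LieModule.lowerCentralSeries ℝ L L 3 = ⊥) := by
  refine ⟨fun B ↦ ?_, fun L _ _ b h02 h03 h23 h01 h12 h13 ↦ ?_⟩
  · simpa only [Pi.basisFun_apply, e4] using
      jacobi_of_basis_brackets (Pi.basisFun ℝ (Fin 4)) κ1 κ2 κ3 ε B
  · have h : BracketTable b κ1 κ2 κ3 ε := ⟨h02, h03, h23, h01, h12, h13⟩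
    exact ⟨h.lowerCentralSeries_one_lt_zero, h.lowerCentralSeries_two_lt_one hκ,
      h.bot_lt_lowerCentralSeries_two hκ, h.lowerCentralSeries_three_eq_bot⟩

/-- The bracket `[u1,u3] = -ε u2`, `[u1,u4] = κ1 u2 + κ2 u3`, `[u3,u4] = κ3 u2` (with
`ε κ2 ≠ 0`) satisfies the Jacobi identity, and the resulting Lie algebra is nilpotent
of class exactly 3: `g ⊋ [g,g] ⊋ [g,[g,g]] ⊋ 0` and `[g,[g,[g,g]]] = 0`. -/
theorem threeStepNilpotent (κ1 κ2 κ3 ε : ℝ) (hε : ε = 1 ∨ ε = -1) (hκ : ε * κ2 ≠ 0) :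
    (∀ B : (Fin 4 → ℝ) →ₗ[ℝ] (Fin 4 → ℝ) →ₗ[ℝ] (Fin 4 → ℝ),
      (∀ X Y, B X Y = - B Y X) →
      B (e4 0) (e4 2) = (-ε) • e4 1 →
      B (e4 0) (e4 3) = κ1 • e4 1 + κ2 • e4 2 →
      B (e4 2) (e4 3) = κ3 • e4 1 →
      B (e4 0) (e4 1) = 0 → B (e4 1) (e4 2) = 0 → B (e4 1) (e4 3) = 0 →
      ∀ X Y Z, B (B X Y) Z + B (B Y Z) X + B (B Z X) Y = 0) ∧
    (∀ (L : Type) [LieRing L] [LieAlgebra ℝ L] (b : Module.Basis (Fin 4) ℝ L),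
      ⁅b 0, b 2⁆ = (-ε) • b 1 →
      ⁅b 0, b 3⁆ = κ1 • b 1 + κ2 • b 2 →
      ⁅b 2, b 3⁆ = κ3 • b 1 →
      ⁅b 0, b 1⁆ = 0 → ⁅b 1, b 2⁆ = 0 → ⁅b 1, b 3⁆ = 0 →
      LieModule.lowerCentralSeries ℝ L L 1 < LieModule.lowerCentralSeries ℝ L L 0 ∧
      LieModule.lowerCentralSeries ℝ L L 2 < LieModule.lowerCentralSeries ℝ L L 1 ∧
      ⊥ < LieModule.lowerCentralSeries ℝ L L 2 ∧
      LieModule.lowerCentralSeries ℝ L L 3 = ⊥) :=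
  threeStepNilpotent_general κ1 κ2 κ3 ε hκ
end
end

section
/- Let α and β be real numbers with α + β² < 0. Then the quantity Δ = (1/(262144·(α + β²)⁹))·(131072·α¹² − 74160·α⁸·(α + β²)³ + 12312·α⁴·(α + β²)⁶ − 2187·(α + β²)⁹) is strictly negative, provided α ≠ 0. -/
/-- The discriminant of the Ricci characteristic polynomial is strictly negative. -/
theorem discriminant_negative (α β : ℝ) (h : α + β^2 < 0) (hα : α ≠ 0) :
    (1 / (262144 * (α + β^2)^9)) *
      (131072 * α^12 - 74160 * α^8 * (α + β^2)^3
        + 12312 * α^4 * (α + β^2)^6 - 2187 * (α + β^2)^9) < 0 := by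
  set s := α + β^2 with hs
  have hs3 : s^3 < 0 := Odd.pow_neg (by decide) h
  have hs9 : s^9 < 0 := Odd.pow_neg (by decide) h
  have ha4 : 0 < α^4 := by positivity
  have ha8 : 0 < α^8 := by positivity
  have ha12 : 0 < α^12 := by rw [show (12:ℕ) = 4*3 from rfl, pow_mul]; exact pow_pos ha4 3
  have hs6 : 0 < s^6 := Even.pow_pos (by decide) (ne_of_lt h)
  have hnum : 0 < 131072 * α^12 - 74160 * α^8 * s^3
      + 12312 * α^4 * s^6 - 2187 * s^9 := by
    nlinarith [mul_pos ha8 (neg_pos.mpr hs3), mul_pos ha4 hs6]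
  have hden : 1 / (262144 * s^9) < 0 := by
    apply one_div_neg.mpr
    nlinarith
  exact mul_neg_of_neg_of_pos hden hnum
end

section
/- Let γ1, γ3, γ5 be real numbers with γ5 ≠ 0, and write c = γ1² + γ3·γ5. The quadratic polynomial in γ2 given by Q(γ2) = 16·γ5⁴·γ2² − 8·γ1·(3·c − 2·γ1²)·γ5²·γ2 + c·(8·c² + 9·c·γ1² − 12·γ1⁴) + 4·(γ1⁶ + 4·γ5⁴) has discriminant equal to −512·γ5⁴·(2·γ5⁴ + c³). Consequently, if c ≥ 0 then Q(γ2) > 0 for every real γ2. -/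
/-- Discriminant identity for the quadratic `Q(γ2) = (64γ5²/3)·B₁₁` and the resulting
positivity when `c = γ1² + γ3 γ5 ≥ 0`. -/
theorem bach_quadratic_discriminant (γ1 γ3 γ5 : ℝ) (hγ5 : γ5 ≠ 0) :
    (-(8 * γ1 * (3 * (γ1^2 + γ3 * γ5) - 2 * γ1^2) * γ5^2))^2
        - 4 * (16 * γ5^4) *
          ((γ1^2 + γ3 * γ5) * (8 * (γ1^2 + γ3 * γ5)^2
              + 9 * (γ1^2 + γ3 * γ5) * γ1^2 - 12 * γ1^4)
            + 4 * (γ1^6 + 4 * γ5^4))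
      = -512 * γ5^4 * (2 * γ5^4 + (γ1^2 + γ3 * γ5)^3) ∧
    (0 ≤ γ1^2 + γ3 * γ5 → ∀ γ2 : ℝ,
      0 < 16 * γ5^4 * γ2^2
          - 8 * γ1 * (3 * (γ1^2 + γ3 * γ5) - 2 * γ1^2) * γ5^2 * γ2
          + (γ1^2 + γ3 * γ5) * (8 * (γ1^2 + γ3 * γ5)^2
              + 9 * (γ1^2 + γ3 * γ5) * γ1^2 - 12 * γ1^4)
          + 4 * (γ1^6 + 4 * γ5^4)) := by
  constructor
  · ring
  · intro hc γ2
    have h5 : 0 < γ5^4 := by positivity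
    have hc3 : 0 ≤ (γ1^2 + γ3 * γ5)^3 := by positivity
    nlinarith [sq_nonneg (32 * γ5^4 * γ2 - 8 * γ1 * (3 * (γ1^2 + γ3 * γ5) - 2 * γ1^2) * γ5^2),
      mul_pos h5 h5, mul_nonneg h5.le hc3]
end

section
/- For any real γ6 and ε = ±1, the 4-dimensional Lie algebra with basis {e1, e2, e3, e4} and nonzero brackets [e1, e3] = −e2, [e1, e4] = ε·√(γ6² + 1)·e2, [e3, e4] = γ6·e2 is isomorphic to the direct product h3 × R: in the basis ẽ1 = e1, ẽ2 = e2, ẽ3 = −e3, ẽ4 = −γ6·e1 + ε·√(γ6² + 1)·e3 + e4, the only nonzero bracket is [ẽ1, ẽ3] = ẽ2. -/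
/-!
Two Lie algebras with bases having the same structure constants are isomorphic through the
linear equivalence matching the bases. The family `ẽ` is obtained from `e` by an invertible
change of basis, and a direct computation shows that it has the structure constants of
`𝔥₃ × ℝ`, as does the basis `c`.
-/

noncomputable section

open Module

section LieBasis

variable {ι R L L' : Type*} [CommRing R] [LieRing L] [LieAlgebra R L]
  [LieRing L'] [LieAlgebra R L']

theorem LinearMap.map_lie_of_basis (b : Basis ι R L) (f : L →ₗ[R] L')
    (h : ∀ i j, f ⁅b i, b j⁆ = ⁅f (b i), f (b j)⁆) (x y : L) : f ⁅x, y⁆ = ⁅f x, f y⁆ := by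
  have hbil : (LieModule.toEnd R L L : L →ₗ[R] End R L).compr₂ f =
      (LieModule.toEnd R L' L' : L' →ₗ[R] End R L').compl₁₂ f f :=
    LinearMap.ext_basis b b h
  exact LinearMap.congr_fun₂ hbil x y

def Module.Basis.lieEquiv (b : Basis ι R L) (c : Basis ι R L')
    (h : ∀ i j, b.equiv c (Equiv.refl ι) ⁅b i, b j⁆ = ⁅c i, c j⁆) : L ≃ₗ⁅R⁆ L' :=
  { b.equiv c (Equiv.refl ι) with
    map_lie' := fun {x y} => (b.equiv c (Equiv.refl ι)).toLinearMap.map_lie_of_basis b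
      (by simpa only [LinearEquiv.coe_coe, Basis.equiv_apply, Equiv.refl_apply] using h) x y }

end LieBasis

section Heisenberg

variable {R L : Type*} [CommRing R] [LieRing L] [LieAlgebra R L]

/-- A basis with the structure constants of `𝔥₃ × R`. -/
structure IsHeisenbergProdBasis (c : Basis (Fin 4) R L) : Prop where
  lie_zero_two : ⁅c 0, c 2⁆ = c 1
  lie_zero_one : ⁅c 0, c 1⁆ = 0
  lie_zero_three : ⁅c 0, c 3⁆ = 0
  lie_one_two : ⁅c 1, c 2⁆ = 0
  lie_one_three : ⁅c 1, c 3⁆ = 0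
  lie_two_three : ⁅c 2, c 3⁆ = 0

def heisenbergProdBracket : Matrix (Fin 4) (Fin 4) R :=
  !![0, 0, 1, 0; 0, 0, 0, 0; -1, 0, 0, 0; 0, 0, 0, 0]

theorem IsHeisenbergProdBasis.lie_eq {c : Basis (Fin 4) R L} (hc : IsHeisenbergProdBasis c)
    (i j : Fin 4) : ⁅c i, c j⁆ = (heisenbergProdBracket : Matrix (Fin 4) (Fin 4) R) i j • c 1 := by
  have skew : ∀ i j, ⁅c j, c i⁆ = -⁅c i, c j⁆ := fun i j => (lie_skew _ _).symm
  fin_cases i <;> fin_cases j <;>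
    simp [heisenbergProdBracket, hc.lie_zero_two, hc.lie_zero_one, hc.lie_zero_three,
      hc.lie_one_two, hc.lie_one_three, hc.lie_two_three, skew 0 2, skew 0 1,
      skew 0 3, skew 1 2, skew 1 3, skew 2 3]

theorem IsHeisenbergProdBasis.nonempty_lieEquiv {L' : Type*} [LieRing L'] [LieAlgebra R L']
    {b : Basis (Fin 4) R L} {c : Basis (Fin 4) R L'} (hb : IsHeisenbergProdBasis b)
    (hc : IsHeisenbergProdBasis c) : Nonempty (L ≃ₗ⁅R⁆ L') :=
  ⟨b.lieEquiv c fun i j => by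
    rw [hb.lie_eq, hc.lie_eq, map_smul, Basis.equiv_apply, Equiv.refl_apply]⟩

end Heisenberg

theorem Module.Basis.exists_coe_eq_shear {R M : Type*} [CommRing R] [Nontrivial R]
    [AddCommGroup M] [Module R M] (b : Basis (Fin 4) R M) (a s : R) :
    ∃ b' : Basis (Fin 4) R M, ⇑b' = ![b 0, b 1, -b 2, a • b 0 + s • b 2 + b 3] := by
  set v : Fin 4 → M := ![b 0, b 1, -b 2, a • b 0 + s • b 2 + b 3]
  have hv : ∀ i, v i ∈ Submodule.span R (Set.range v) := fun i => Submodule.subset_span ⟨i, rfl⟩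
  have hspan : ⊤ ≤ Submodule.span R (Set.range v) := by
    rw [← b.span_eq, Submodule.span_le]
    rintro _ ⟨i, rfl⟩
    fin_cases i
    · exact hv 0
    · exact hv 1
    · simpa [v] using neg_mem (hv 2)
    · have hb3 : b 3 = v 3 - a • v 0 + s • v 2 := by simp [v]; abel
      show b 3 ∈ _
      rw [hb3]
      exact add_mem (sub_mem (hv 3) (Submodule.smul_mem _ _ (hv 0)))
        (Submodule.smul_mem _ _ (hv 2))
  exact ⟨basisOfTopLeSpanOfCardEqFinrank v hspan (by simp [finrank_eq_card_basis b]),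
    coe_basisOfTopLeSpanOfCardEqFinrank ..⟩

theorem isomorphic_to_h3_times_R'_general (γ6 ε : ℝ) :
    ∀ (L : Type) [LieRing L] [LieAlgebra ℝ L] (b : Module.Basis (Fin 4) ℝ L),
      ⁅b 0, b 2⁆ = -(b 1) →
      ⁅b 0, b 3⁆ = (ε * Real.sqrt (γ6^2 + 1)) • b 1 →
      ⁅b 2, b 3⁆ = γ6 • b 1 →
      ⁅b 0, b 1⁆ = 0 → ⁅b 1, b 2⁆ = 0 → ⁅b 1, b 3⁆ = 0 →
      (⁅b 0, (-γ6) • b 0 + (ε * Real.sqrt (γ6^2 + 1)) • b 2 + b 3⁆ = 0 ∧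
       ⁅b 1, (-γ6) • b 0 + (ε * Real.sqrt (γ6^2 + 1)) • b 2 + b 3⁆ = 0 ∧
       ⁅-(b 2), (-γ6) • b 0 + (ε * Real.sqrt (γ6^2 + 1)) • b 2 + b 3⁆ = 0 ∧
       ⁅b 0, -(b 2)⁆ = b 1) ∧
      (∀ (L' : Type) [LieRing L'] [LieAlgebra ℝ L'] (c : Module.Basis (Fin 4) ℝ L'),
        ⁅c 0, c 2⁆ = c 1 →
        ⁅c 0, c 1⁆ = 0 → ⁅c 0, c 3⁆ = 0 → ⁅c 1, c 2⁆ = 0 → ⁅c 1, c 3⁆ = 0 →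
        ⁅c 2, c 3⁆ = 0 →
        Nonempty (L ≃ₗ⁅ℝ⁆ L')) := by
  intro L _ _ b h02 h03 h23 h01 h12 h13
  have h10 : ⁅b 1, b 0⁆ = 0 := by rw [← lie_skew, h01, neg_zero]
  have h20 : ⁅b 2, b 0⁆ = b 1 := by rw [← lie_skew, h02, neg_neg]
  have hrel : ⁅b 0, (-γ6) • b 0 + (ε * √(γ6^2 + 1)) • b 2 + b 3⁆ = 0 ∧
      ⁅b 1, (-γ6) • b 0 + (ε * √(γ6^2 + 1)) • b 2 + b 3⁆ = 0 ∧
      ⁅-(b 2), (-γ6) • b 0 + (ε * √(γ6^2 + 1)) • b 2 + b 3⁆ = 0 ∧ ⁅b 0, -(b 2)⁆ = b 1 := by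
    refine ⟨?_, ?_, ?_, ?_⟩
    · simp [h02, h03]
    · simp [h10, h12, h13]
    · simp [h20, h23]
    · simp [h02]
  refine ⟨hrel, fun L' _ _ c k02 k01 k03 k12 k13 k23 => ?_⟩
  obtain ⟨b', hb'⟩ := b.exists_coe_eq_shear (-γ6) (ε * √(γ6^2 + 1))
  have hb'H : IsHeisenbergProdBasis b' := by
    obtain ⟨h0, h1, h2, h3⟩ := hrel
    exact ⟨by simpa [hb'] using h3, by simpa [hb'] using h01, by simpa [hb'] using h0,
      by simp [hb', h12], by simpa [hb'] using h1, by simpa [hb'] using h2⟩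
  exact hb'H.nonempty_lieEquiv ⟨k02, k01, k03, k12, k13, k23⟩

/-- The Lie algebra with nonzero brackets `[e1,e3] = -e2`, `[e1,e4] = ε √(γ6²+1) e2`,
`[e3,e4] = γ6 e2` is isomorphic to `h3 × ℝ`: in the basis `ẽ1 = e1`, `ẽ2 = e2`,
`ẽ3 = -e3`, `ẽ4 = -γ6 e1 + ε √(γ6²+1) e3 + e4` the only nonzero bracket is
`[ẽ1,ẽ3] = ẽ2`. -/
theorem isomorphic_to_h3_times_R' (γ6 ε : ℝ) (hε : ε = 1 ∨ ε = -1) :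
    ∀ (L : Type) [LieRing L] [LieAlgebra ℝ L] (b : Module.Basis (Fin 4) ℝ L),
      ⁅b 0, b 2⁆ = -(b 1) →
      ⁅b 0, b 3⁆ = (ε * Real.sqrt (γ6^2 + 1)) • b 1 →
      ⁅b 2, b 3⁆ = γ6 • b 1 →
      ⁅b 0, b 1⁆ = 0 → ⁅b 1, b 2⁆ = 0 → ⁅b 1, b 3⁆ = 0 →
      (⁅b 0, (-γ6) • b 0 + (ε * Real.sqrt (γ6^2 + 1)) • b 2 + b 3⁆ = 0 ∧
       ⁅b 1, (-γ6) • b 0 + (ε * Real.sqrt (γ6^2 + 1)) • b 2 + b 3⁆ = 0 ∧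
       ⁅-(b 2), (-γ6) • b 0 + (ε * Real.sqrt (γ6^2 + 1)) • b 2 + b 3⁆ = 0 ∧
       ⁅b 0, -(b 2)⁆ = b 1) ∧
      (∀ (L' : Type) [LieRing L'] [LieAlgebra ℝ L'] (c : Module.Basis (Fin 4) ℝ L'),
        ⁅c 0, c 2⁆ = c 1 →
        ⁅c 0, c 1⁆ = 0 → ⁅c 0, c 3⁆ = 0 → ⁅c 1, c 2⁆ = 0 → ⁅c 1, c 3⁆ = 0 →
        ⁅c 2, c 3⁆ = 0 →
        Nonempty (L ≃ₗ⁅ℝ⁆ L')) :=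
  isomorphic_to_h3_times_R'_general γ6 ε
end
end

section
/- The bilinear antisymmetric bracket on R^4 with basis {u1, u2, u3, u4} determined by [u1, u3] = −u2, [u1, u4] = −u1, [u2, u4] = 3·u2, [u3, u4] = 4·u3, and all other basis brackets zero, satisfies the Jacobi identity, and the resulting Lie algebra is solvable but not nilpotent. -/
/-!
The Jacobiator of a bilinear map is trilinear, so the Jacobi identity only has to be checked on
triples of basis vectors. For solvability, the derived algebra lies in `span {u1, u2, u3}` (a
Heisenberg algebra), whose brackets lie in `span {u2}`, which is abelian. The algebra is not
nilpotent because `[u4, u1] = u1`: the operator `ad u4` has the eigenvalue `1`, whereas in a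
nilpotent Lie algebra every `ad x` is nilpotent.
-/

noncomputable section

open LieAlgebra LieModule Submodule

section Jacobiator

variable {R M : Type*} [CommRing R] [AddCommGroup M] [Module R M]

def jacobiator (B : M →ₗ[R] M →ₗ[R] M) : M →ₗ[R] M →ₗ[R] M →ₗ[R] M :=
  B.compr₂ B + (LinearMap.lflip.toLinearMap ∘ₗ B.compr₂ B).flip +
    LinearMap.lflip.toLinearMap ∘ₗ (B.compr₂ B).flip

theorem jacobiator_apply (B : M →ₗ[R] M →ₗ[R] M) (X Y Z : M) :
    jacobiator B X Y Z = B (B X Y) Z + B (B Y Z) X + B (B Z X) Y := by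
  simp [jacobiator]

theorem jacobiator_eq_zero_of_basis {ι : Type*} (b : Module.Basis ι R M)
    (B : M →ₗ[R] M →ₗ[R] M) (h : ∀ i j k, jacobiator B (b i) (b j) (b k) = 0) :
    jacobiator B = 0 :=
  b.ext fun i => b.ext fun j => b.ext fun k => h i j k

end Jacobiator

section Span

variable {R L : Type*} [CommRing R] [LieRing L] [LieAlgebra R L]

theorem lie_mem_of_mem_span_s18 {s t : Set L} {P : Submodule R L}
    (h : ∀ u ∈ s, ∀ v ∈ t, ⁅u, v⁆ ∈ P) {x y : L} (hx : x ∈ span R s) (hy : y ∈ span R t) :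
    ⁅x, y⁆ ∈ P := by
  have hxy := apply_mem_map₂ (toEnd R L L : L →ₗ[R] Module.End R L) hx hy
  rw [map₂_span_span] at hxy
  refine span_le.mpr ?_ hxy
  rintro _ ⟨u, hu, v, hv, rfl⟩
  exact h u hu v hv

theorem lie_mem_of_mem_span_image {ι : Type*} [LinearOrder ι] {v : ι → L} {T : Set ι}
    {P : Submodule R L} (h : ∀ i ∈ T, ∀ j ∈ T, i < j → ⁅v i, v j⁆ ∈ P) {x y : L}
    (hx : x ∈ span R (v '' T)) (hy : y ∈ span R (v '' T)) : ⁅x, y⁆ ∈ P := by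
  refine lie_mem_of_mem_span_s18 ?_ hx hy
  rintro _ ⟨i, hi, rfl⟩ _ ⟨j, hj, rfl⟩
  rcases lt_trichotomy i j with hij | rfl | hji
  · exact h i hi j hj hij
  · simp
  · rw [← lie_skew]
    exact neg_mem (h j hj i hi hji)

theorem derivedSeries_succ_le_of_lie_mem {k : ℕ} {P Q : Submodule R L}
    (hk : (derivedSeries R L k).toSubmodule ≤ P) (hPQ : ∀ x ∈ P, ∀ y ∈ P, ⁅x, y⁆ ∈ Q) :
    (derivedSeries R L (k + 1)).toSubmodule ≤ Q := by
  rw [derivedSeries_def, derivedSeriesOfIdeal_succ, LieSubmodule.lieIdeal_oper_eq_linear_span',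
    span_le]
  rintro _ ⟨x, hx, y, hy, rfl⟩
  exact hPQ x (hk hx) y (hk hy)

end Span

theorem not_isNilpotent_of_lie_eq_self (R : Type*) {L M : Type*} [CommRing R] [LieRing L]
    [LieAlgebra R L] [AddCommGroup M] [Module R M] [LieRingModule L M] [LieModule R L M] {x : L}
    {m : M} (hm : m ≠ 0) (hxm : ⁅x, m⁆ = m) : ¬ LieModule.IsNilpotent L M := by
  intro hnil
  obtain ⟨n, hn⟩ := isNilpotent_toEnd_of_isNilpotent R L M x
  apply hm
  rw [← Function.iterate_fixed (f := toEnd R L M x) hxm n, ← Module.End.pow_apply, hn,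
    LinearMap.zero_apply]

theorem jacobiator_caseLiii_eq_zero (B : (Fin 4 → ℝ) →ₗ[ℝ] (Fin 4 → ℝ) →ₗ[ℝ] (Fin 4 → ℝ))
    (hskew : ∀ X Y, B X Y = - B Y X)
    (h02 : B (e4 0) (e4 2) = -(e4 1)) (h03 : B (e4 0) (e4 3) = -(e4 0))
    (h13 : B (e4 1) (e4 3) = (3 : ℝ) • e4 1) (h23 : B (e4 2) (e4 3) = (4 : ℝ) • e4 2)
    (h01 : B (e4 0) (e4 1) = 0) (h12 : B (e4 1) (e4 2) = 0) :
    jacobiator B = 0 := by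
  have hself : ∀ X, B X X = 0 := fun X => self_eq_neg.mp (hskew X X)
  have hswap {X Y Z : Fin 4 → ℝ} (h : B X Y = Z) : B Y X = -Z := by rw [hskew, h]
  have hbasis : ⇑(Pi.basisFun ℝ (Fin 4)) = e4 := by ext i; simp [e4]
  refine jacobiator_eq_zero_of_basis (Pi.basisFun ℝ (Fin 4)) B fun i j k => ?_
  rw [hbasis, jacobiator_apply]
  fin_cases i <;> fin_cases j <;> fin_cases k <;>
    simp only [Fin.zero_eta, Fin.mk_one, Fin.reduceFinMk, Fin.isValue, hself, h01, h02, h03, h12,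
      h13, h23, hswap h01, hswap h02, hswap h03, hswap h12, hswap h13, hswap h23, map_neg,
      map_smul, map_zero, LinearMap.neg_apply, LinearMap.smul_apply, LinearMap.zero_apply] <;>
    module

theorem isSolvable_caseLiii {L : Type*} [LieRing L] [LieAlgebra ℝ L]
    (b : Module.Basis (Fin 4) ℝ L)
    (h02 : ⁅b 0, b 2⁆ = -(b 1)) (h03 : ⁅b 0, b 3⁆ = -(b 0))
    (h13 : ⁅b 1, b 3⁆ = (3 : ℝ) • b 1) (h23 : ⁅b 2, b 3⁆ = (4 : ℝ) • b 2)
    (h01 : ⁅b 0, b 1⁆ = 0) (h12 : ⁅b 1, b 2⁆ = 0) : IsSolvable L := by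
  have hD0 : (derivedSeries ℝ L 0).toSubmodule ≤ span ℝ (b '' Set.univ) := by
    rw [Set.image_univ, b.span_eq]
    exact le_top
  have hD1 : (derivedSeries ℝ L 1).toSubmodule ≤ span ℝ (b '' {0, 1, 2}) :=
    derivedSeries_succ_le_of_lie_mem hD0 fun x hx y hy => lie_mem_of_mem_span_image
      (fun i _ j _ hij => by
        fin_cases i <;> fin_cases j <;> simp_all [b.self_mem_span_image, Submodule.smul_mem])
      hx hy
  have hD2 : (derivedSeries ℝ L 2).toSubmodule ≤ span ℝ (b '' {1}) :=
    derivedSeries_succ_le_of_lie_mem hD1 fun x hx y hy => lie_mem_of_mem_span_image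
      (fun i hi j hj hij => by
        fin_cases i <;> fin_cases j <;> simp_all)
      hx hy
  have hD3 : (derivedSeries ℝ L 3).toSubmodule ≤ ⊥ :=
    derivedSeries_succ_le_of_lie_mem hD2 fun x hx y hy => lie_mem_of_mem_span_image
      (fun i hi j hj hij => by
        fin_cases i <;> fin_cases j <;> simp_all)
      hx hy
  exact IsSolvable.mk (k := 3) ((LieSubmodule.toSubmodule_eq_bot _).mp (le_bot_iff.mp hD3))

/-- The brackets `[u1,u3] = -u2`, `[u1,u4] = -u1`, `[u2,u4] = 3u2`, `[u3,u4] = 4u3`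
satisfy the Jacobi identity, and the resulting Lie algebra is solvable but not
nilpotent. -/
theorem caseLiii_solvable_not_nilpotent :
    (∀ B : (Fin 4 → ℝ) →ₗ[ℝ] (Fin 4 → ℝ) →ₗ[ℝ] (Fin 4 → ℝ),
      (∀ X Y, B X Y = - B Y X) →
      B (e4 0) (e4 2) = -(e4 1) →
      B (e4 0) (e4 3) = -(e4 0) →
      B (e4 1) (e4 3) = (3 : ℝ) • e4 1 →
      B (e4 2) (e4 3) = (4 : ℝ) • e4 2 →
      B (e4 0) (e4 1) = 0 → B (e4 1) (e4 2) = 0 →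
      ∀ X Y Z, B (B X Y) Z + B (B Y Z) X + B (B Z X) Y = 0) ∧
    (∀ (L : Type) [LieRing L] [LieAlgebra ℝ L] (b : Module.Basis (Fin 4) ℝ L),
      ⁅b 0, b 2⁆ = -(b 1) → ⁅b 0, b 3⁆ = -(b 0) →
      ⁅b 1, b 3⁆ = (3 : ℝ) • b 1 → ⁅b 2, b 3⁆ = (4 : ℝ) • b 2 →
      ⁅b 0, b 1⁆ = 0 → ⁅b 1, b 2⁆ = 0 →
      LieAlgebra.IsSolvable L ∧ ¬ LieModule.IsNilpotent L L) := by
  refine ⟨fun B hskew h02 h03 h13 h23 h01 h12 X Y Z => ?_,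
    fun L _ _ b h02 h03 h13 h23 h01 h12 => ⟨isSolvable_caseLiii b h02 h03 h13 h23 h01 h12, ?_⟩⟩
  · rw [← jacobiator_apply, jacobiator_caseLiii_eq_zero B hskew h02 h03 h13 h23 h01 h12]
    rfl
  · have h30 : ⁅b 3, b 0⁆ = b 0 := by rw [← lie_skew, h03, neg_neg]
    exact not_isNilpotent_of_lie_eq_self ℝ (b.ne_zero 0) h30
end
end
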